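/- arXiv:1804.07231 — 2 statements merged into one kernel-verified Lean document; each statement's English description precedes it below -/
import Mathlib

section
/- Suppose S ⊆ A × B is a shuffling relation between linear orders (A,<_A) and (B,<_B). Then the map J ↦ ⋃_{b ∈ J} S(A,b), sending an open initial segment J of B to an open initial segment of A, is an order isomorphism between the Dedekind completions (𝔇(B),⊂) and (𝔇(A),⊂). -/
/-- A shuffling relation between linear orders `A` and `B`: a nonempty relation such that
the fibers `S(A,b)` form a strictly increasing family of initial segments of `A`, none of
which has a supremum in `A`, and the fibers `S(a,B)` form a strictly decreasing family of
final segments of `B`. -/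
def IsShuffling {A B : Type*} [LinearOrder A] [LinearOrder B] (S : A → B → Prop) : Prop :=
  (∃ (a : A) (b : B), S a b) ∧
  (∀ (b : B) (x : A), S x b → ∀ y : A, y ≤ x → S y b) ∧
  (∀ b b' : B, b < b' → {x : A | S x b} ⊂ {x : A | S x b'}) ∧
  (∀ b : B, ¬ ∃ a : A, IsLUB {x : A | S x b} a) ∧
  (∀ (a : A) (y : B), S a y → ∀ y' : B, y ≤ y' → S a y') ∧
  (∀ a a' : A, a < a' → {y : B | S a' y} ⊂ {y : B | S a y})

/-- An open initial segment of a linear order: a downward closed set with no greatest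
element.  The collection of all such sets, ordered by inclusion, is the Dedekind
completion `𝔇(A)`. -/
def OpenInitial {A : Type*} [LinearOrder A] (I : Set A) : Prop :=
  (∀ x ∈ I, ∀ y, y ≤ x → y ∈ I) ∧ ∀ x ∈ I, ∃ y ∈ I, x < y

/-! The fibre `S(A,b)` is below every point of `A` outside it, so `b < b'` yields a point of
`S(A,b')` above all of `S(A,b)`: this makes `J ↦ ⋃_{b ∈ J} S(A,b)` land in open initial
segments and reflect inclusion. Dually `x < y` yields a `b` with `x ∈ S(A,b)` and `y ∉ S(A,b)`,
so an open initial segment `I` of `A` is the union of the fibres strictly contained in it, and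
these fibres are indexed by an open initial segment of `B`. -/

section

variable {A B : Type*} [LinearOrder A] [LinearOrder B]

theorem OpenInitial.lt_of_mem_of_notMem {I : Set A} (hI : OpenInitial I) {x y : A}
    (hx : x ∈ I) (hy : y ∉ I) : x < y :=
  lt_of_not_ge fun hyx => hy (hI.1 x hx y hyx)

def fiberUnion (S : A → B → Prop) (J : Set B) : Set A := {x : A | ∃ b ∈ J, S x b}

namespace IsShuffling

variable {S : A → B → Prop} (hS : IsShuffling S)
include hS

theorem of_le_left {x y : A} {b : B} (hx : S x b) (hyx : y ≤ x) : S y b :=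
  hS.2.1 b x hx y hyx

theorem of_le_right {x : A} {b b' : B} (hb : S x b) (hbb' : b ≤ b') : S x b' := by
  rcases hbb'.lt_or_eq with hlt | rfl
  · exact (hS.2.2.1 b _ hlt).1 hb
  · exact hb

theorem lt_of_notMem {x y : A} {b : B} (hx : S x b) (hy : ¬ S y b) : x < y :=
  lt_of_not_ge fun hyx => hy (hS.of_le_left hx hyx)

theorem exists_separating_left {b b' : B} (h : b < b') : ∃ z : A, S z b' ∧ ¬ S z b :=
  Set.exists_of_ssubset (hS.2.2.1 b b' h)

theorem exists_separating_right {x y : A} (h : x < y) : ∃ b : B, S x b ∧ ¬ S y b :=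
  Set.exists_of_ssubset (hS.2.2.2.2.2 x y h)

theorem openInitial_fiberUnion {J : Set B} (hJ : OpenInitial J) :
    OpenInitial (fiberUnion S J) := by
  refine ⟨fun x ⟨b, hb, hxb⟩ y hyx => ⟨b, hb, hS.of_le_left hxb hyx⟩, ?_⟩
  rintro x ⟨b, hb, hxb⟩
  obtain ⟨b', hb', hbb'⟩ := hJ.2 b hb
  obtain ⟨z, hzb', hzb⟩ := hS.exists_separating_left hbb'
  exact ⟨z, ⟨b', hb', hzb'⟩, hS.lt_of_notMem hxb hzb⟩

theorem fiberUnion_subset_fiberUnion_iff {J J' : Set B} (hJ : OpenInitial J)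
    (hJ' : OpenInitial J') : fiberUnion S J ⊆ fiberUnion S J' ↔ J ⊆ J' := by
  refine ⟨fun h b hb => ?_, fun h x ⟨b, hb, hxb⟩ => ⟨b, h hb, hxb⟩⟩
  by_contra hbJ'
  obtain ⟨b₂, hb₂, hbb₂⟩ := hJ.2 b hb
  obtain ⟨z, hzb₂, hzb⟩ := hS.exists_separating_left hbb₂
  obtain ⟨b', hb', hzb'⟩ := h ⟨b₂, hb₂, hzb₂⟩
  exact hzb (hS.of_le_right hzb' (hJ'.lt_of_mem_of_notMem hb' hbJ').le)

theorem exists_fiber_ssubset {I : Set A} (hI : OpenInitial I) {x : A} (hx : x ∈ I) :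
    ∃ b : B, S x b ∧ {z : A | S z b} ⊂ I := by
  obtain ⟨y, hy, hxy⟩ := hI.2 x hx
  obtain ⟨b, hxb, hyb⟩ := hS.exists_separating_right hxy
  refine ⟨b, hxb, ssubset_of_subset_not_subset ?_ fun h => hyb (h hy)⟩
  exact fun z hz => hI.1 y hy z (hS.lt_of_notMem hz hyb).le

theorem exists_fiberUnion_eq {I : Set A} (hI : OpenInitial I) :
    ∃ J : Set B, OpenInitial J ∧ fiberUnion S J = I := by
  refine ⟨{b : B | {x : A | S x b} ⊂ I}, ⟨?_, ?_⟩, ?_⟩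
  · exact fun b hb b' hb'b =>
      Set.ssubset_of_subset_of_ssubset (fun x hx => hS.of_le_right hx hb'b) hb
  · intro b hb
    obtain ⟨x, hxI, hxb⟩ := Set.exists_of_ssubset hb
    obtain ⟨b', hxb', hb'⟩ := hS.exists_fiber_ssubset hI hxI
    exact ⟨b', hb', lt_of_not_ge fun hb'b => hxb (hS.of_le_right hxb' hb'b)⟩
  · ext x
    exact ⟨fun ⟨b, hb, hxb⟩ => hb.1 hxb,
      fun hx => (hS.exists_fiber_ssubset hI hx).imp fun _ h => ⟨h.2, h.1⟩⟩

end IsShuffling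

end

theorem stmt_10 {A B : Type*} [LinearOrder A] [LinearOrder B] (S : A → B → Prop)
    (hS : IsShuffling S) :
    -- the map J ↦ ⋃_{b ∈ J} S(A,b) sends 𝔇(B) into 𝔇(A)
    (∀ J : Set B, OpenInitial J → OpenInitial {x : A | ∃ b ∈ J, S x b}) ∧
    -- it is an order embedding (hence injective)
    (∀ J J' : Set B, OpenInitial J → OpenInitial J' →
      (J ⊆ J' ↔ {x : A | ∃ b ∈ J, S x b} ⊆ {x : A | ∃ b ∈ J', S x b})) ∧
    -- it is surjective onto 𝔇(A)
    (∀ I : Set A, OpenInitial I →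
      ∃ J : Set B, OpenInitial J ∧ {x : A | ∃ b ∈ J, S x b} = I) :=
  ⟨fun _ hJ => hS.openInitial_fiberUnion hJ,
    fun _ _ hJ hJ' => (hS.fiberUnion_subset_fiberUnion_iff hJ hJ').symm,
    fun _ hI => hS.exists_fiberUnion_eq hI⟩
end

section
/- Let ((A_i,<_i))_{i<α} be a family of countable linear orders shuffled by a coherent family of shuffling relations. Then the possible order types are constrained as follows: all A_i are countable dense linear orders, at most one A_i has a minimum, and at most one A_i has a maximum. In particular each A_i has order type η, 1+η, η+1, or 1+η+1 (the order types of the rationals in (0,1), [0,1), (0,1], [0,1] respectively), with at most one of the A_i having a least element and at most one having a greatest element. -/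
namespace IsShuffling

variable {A B : Type*} [LinearOrder A] [LinearOrder B] {S : A → B → Prop} (hS : IsShuffling S)
include hS

theorem exists_rel : ∃ a b, S a b := hS.1

theorem rel_of_le_left {a a' : A} {b : B} (h : S a' b) (ha : a ≤ a') : S a b := hS.2.1 b a' h a ha

theorem setOf_rel_left_ssubset {b b' : B} (hb : b < b') : {a | S a b} ⊂ {a | S a b'} :=
  hS.2.2.1 b b' hb

theorem not_isLUB (b : B) (a : A) : ¬IsLUB {x | S x b} a := fun h => hS.2.2.2.1 b ⟨a, h⟩

theorem rel_of_le_right {a : A} {b b' : B} (h : S a b) (hb : b ≤ b') : S a b' :=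
  hS.2.2.2.2.1 a b h b' hb

theorem setOf_rel_right_ssubset {a a' : A} (ha : a < a') : {b | S a' b} ⊂ {b | S a b} :=
  hS.2.2.2.2.2 a a' ha

theorem exists_gt_rel {a : A} {b : B} (h : S a b) : ∃ a', a < a' ∧ S a' b := by
  by_contra! hmax
  exact hS.not_isLUB b a ⟨fun x hx => le_of_not_gt fun hax => hmax x hax hx, fun _ hu => hu h⟩

theorem nontrivial_left : Nontrivial A := by
  obtain ⟨a, b, hab⟩ := hS.exists_rel
  obtain ⟨a', haa', -⟩ := hS.exists_gt_rel hab
  exact ⟨⟨a, a', haa'.ne⟩⟩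

theorem nontrivial_right : Nontrivial B := by
  obtain ⟨a, b, hab⟩ := hS.exists_rel
  obtain ⟨a', haa', ha'b⟩ := hS.exists_gt_rel hab
  obtain ⟨b', -, hb'⟩ := Set.exists_of_ssubset (hS.setOf_rel_right_ssubset haa')
  exact ⟨⟨b, b', fun h => hb' (h ▸ ha'b)⟩⟩

theorem denselyOrdered_left : DenselyOrdered A := by
  refine ⟨fun a a' haa' => ?_⟩
  by_contra! hgap
  obtain ⟨b, hab, ha'b⟩ := Set.exists_of_ssubset (hS.setOf_rel_right_ssubset haa')
  -- with no point strictly between them, `a` would be the largest element of `{x | S x b}`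
  refine hS.not_isLUB b a ⟨fun x hx => le_of_not_gt fun hax => ?_, fun _ hu => hu hab⟩
  exact ha'b (hS.rel_of_le_left hx (hgap x hax))

theorem denselyOrdered_right : DenselyOrdered B := by
  refine ⟨fun b b' hbb' => ?_⟩
  by_contra! hgap
  obtain ⟨a, hab', hab⟩ := Set.exists_of_ssubset (hS.setOf_rel_left_ssubset hbb')
  obtain ⟨a', haa', ha'b'⟩ := hS.exists_gt_rel hab'
  have ha'b : ¬S a' b := fun h => hab (hS.rel_of_le_left h haa'.le)
  -- with no point strictly between `b` and `b'`, every `x` with `S x b'` but not `S x b`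
  -- is related exactly to the elements `≥ b'`, so `a` and `a'` have the same fiber
  have hfiber : ∀ x, S x b' → ¬S x b → {y | S x y} = Set.Ici b' := fun x hxb' hxb => by
    ext y
    refine ⟨fun hxy => le_of_not_gt fun hyb' => hxb (hS.rel_of_le_right hxy ?_),
      fun hy => hS.rel_of_le_right hxb' hy⟩
    exact le_of_not_gt fun hby => hyb'.not_ge (hgap y hby)
  have hss := hS.setOf_rel_right_ssubset haa'
  rw [hfiber a hab' hab, hfiber a' ha'b' ha'b] at hss
  exact hss.ne rfl

theorem not_isBot_of_isBot {a : A} (ha : IsBot a) (b : B) : ¬IsBot b := by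
  intro hb
  have hab : S a b := by
    by_contra hab
    refine hS.not_isLUB b a ⟨fun x hx => ?_, fun u _ => ha u⟩
    exact absurd (hS.rel_of_le_left hx (ha x)) hab
  -- then the fiber of some `a' > a` contains the bottom `b`, hence all of `B`
  obtain ⟨a', haa', ha'b⟩ := hS.exists_gt_rel hab
  obtain ⟨b', -, hb'⟩ := Set.exists_of_ssubset (hS.setOf_rel_right_ssubset haa')
  exact hb' (hS.rel_of_le_right ha'b (hb b'))

theorem not_isTop_of_isTop {a : A} (ha : IsTop a) (b : B) : ¬IsTop b := by
  intro hb
  have : DenselyOrdered A := hS.denselyOrdered_left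
  -- the fiber over the top `b` is exactly `Iio a`, whose supremum is `a`
  refine hS.not_isLUB b a ?_
  convert isLUB_Iio (a := a) using 1
  ext x
  refine ⟨fun hx => lt_of_le_of_ne (ha x) fun hxa => ?_, fun hxa => ?_⟩
  · subst hxa
    exact hS.not_isLUB b x ⟨fun y _ => ha y, fun _ hu => hu hx⟩
  · obtain ⟨b', hb', -⟩ := Set.exists_of_ssubset (hS.setOf_rel_right_ssubset hxa)
    exact hS.rel_of_le_right hb' (hb b')

end IsShuffling

section CountableDense

variable {α β : Type*} [LinearOrder α] [LinearOrder β]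

instance [DenselyOrdered α] (a : α) : DenselyOrdered {x // x ≠ a} := by
  refine ⟨fun x y hxy => ?_⟩
  obtain ⟨c, hxc, hcy⟩ := exists_between (Subtype.coe_lt_coe.2 hxy)
  by_cases hca : c = a
  · obtain ⟨d, hxd, hdc⟩ := exists_between hxc
    exact ⟨⟨d, (hdc.trans_eq hca).ne⟩, hxd, hdc.trans hcy⟩
  · exact ⟨⟨c, hca⟩, hxc, hcy⟩

instance [OrderTop α] [DenselyOrdered α] : NoMaxOrder {x : α // x ≠ ⊤} :=
  ⟨fun x => by
    obtain ⟨c, hxc, hc⟩ := exists_between (lt_top_iff_ne_top.2 x.2)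
    exact ⟨⟨c, hc.ne⟩, hxc⟩⟩

instance [OrderTop α] [NoMinOrder α] : NoMinOrder {x : α // x ≠ ⊤} :=
  ⟨fun x => by
    obtain ⟨c, hc⟩ := exists_lt x.1
    exact ⟨⟨c, (hc.trans_le le_top).ne⟩, hc⟩⟩

instance [OrderTop α] [NoMinOrder α] : Nonempty {x : α // x ≠ ⊤} :=
  let ⟨c, hc⟩ := exists_lt (⊤ : α)
  ⟨⟨c, hc.ne⟩⟩

theorem nonempty_orderIso_of_subtype_ne_top [OrderTop α] [OrderTop β]
    (e : {a : α // a ≠ ⊤} ≃o {b : β // b ≠ ⊤}) : Nonempty (α ≃o β) := by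
  classical
  exact ⟨WithTop.subtypeOrderIso.symm.trans (e.withTopCongr.trans WithTop.subtypeOrderIso)⟩

variable [Countable α] [DenselyOrdered α] [Countable β] [DenselyOrdered β]

theorem nonempty_orderIso_of_orderTop [OrderTop α] [NoMinOrder α] [OrderTop β] [NoMinOrder β] :
    Nonempty (α ≃o β) :=
  let ⟨e⟩ := Order.iso_of_countable_dense {a : α // a ≠ ⊤} {b : β // b ≠ ⊤}
  nonempty_orderIso_of_subtype_ne_top e

theorem nonempty_orderIso_of_orderBot [OrderBot α] [NoMaxOrder α] [OrderBot β] [NoMaxOrder β] :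
    Nonempty (α ≃o β) :=
  have : Countable αᵒᵈ := ‹Countable α›
  have : Countable βᵒᵈ := ‹Countable β›
  let ⟨e⟩ := nonempty_orderIso_of_orderTop (α := αᵒᵈ) (β := βᵒᵈ)
  ⟨e.dual⟩

theorem nonempty_orderIso_of_boundedOrder [BoundedOrder α] [Nontrivial α] [BoundedOrder β]
    [Nontrivial β] : Nonempty (α ≃o β) := by
  let : OrderBot {a : α // a ≠ ⊤} := Subtype.orderBot bot_ne_top
  let : OrderBot {b : β // b ≠ ⊤} := Subtype.orderBot bot_ne_top
  obtain ⟨e⟩ := nonempty_orderIso_of_orderBot (α := {a : α // a ≠ ⊤}) (β := {b : β // b ≠ ⊤})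
  exact nonempty_orderIso_of_subtype_ne_top e

theorem nonempty_orderIso_rat_Ioo_or_Ico_or_Ioc_or_Icc [Nontrivial α] :
    Nonempty (α ≃o Set.Ioo (0 : ℚ) 1) ∨ Nonempty (α ≃o Set.Ico (0 : ℚ) 1) ∨
      Nonempty (α ≃o Set.Ioc (0 : ℚ) 1) ∨ Nonempty (α ≃o Set.Icc (0 : ℚ) 1) := by
  have : Fact ((0 : ℚ) < 1) := ⟨one_pos⟩
  have : Fact ((0 : ℚ) ≤ 1) := ⟨zero_le_one⟩
  have hmin : ¬(∃ a : α, IsBot a) → NoMinOrder α := fun h =>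
    have := noBotOrder_iff.2 fun a ha => h ⟨a, ha⟩; NoBotOrder.to_noMinOrder α
  have hmax : ¬(∃ a : α, IsTop a) → NoMaxOrder α := fun h =>
    have := noTopOrder_iff.2 fun a ha => h ⟨a, ha⟩; NoTopOrder.to_noMaxOrder α
  by_cases hbot : ∃ a : α, IsBot a <;> by_cases htop : ∃ a : α, IsTop a
  · obtain ⟨⟨a, ha⟩, ⟨a', ha'⟩⟩ := And.intro hbot htop
    let : BoundedOrder α := { bot := a, bot_le := ha, top := a', le_top := ha' }
    have : Nontrivial (Set.Icc (0 : ℚ) 1) := nontrivial_of_ne ⊥ ⊤ (by simp [Subtype.ext_iff])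
    exact .inr <| .inr <| .inr nonempty_orderIso_of_boundedOrder
  · obtain ⟨a, ha⟩ := hbot
    let : OrderBot α := { bot := a, bot_le := ha }
    have := hmax htop
    exact .inr <| .inl nonempty_orderIso_of_orderBot
  · obtain ⟨a, ha⟩ := htop
    let : OrderTop α := { top := a, le_top := ha }
    have := hmin hbot
    exact .inr <| .inr <| .inl nonempty_orderIso_of_orderTop
  · have := hmin hbot
    have := hmax htop
    have : Nonempty (Set.Ioo (0 : ℚ) 1) := ⟨⟨1 / 2, by norm_num, by norm_num⟩⟩
    exact .inl (Order.iso_of_countable_dense α _)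

end CountableDense

theorem stmt_15_general {ι : Type*} [LinearOrder ι]
    (A : ι → Type*) [∀ i, LinearOrder (A i)] [∀ i, Countable (A i)]
    (S : ∀ i j : ι, A i → A j → Prop)
    (hsh : ∀ i j : ι, i < j → IsShuffling (S i j))
    (hι : ∃ i j : ι, i ≠ j) :
    -- each A_i is a (countable) dense linear order
    (∀ i : ι, ∀ a b : A i, a < b → ∃ c : A i, a < c ∧ c < b) ∧
    -- at most one of the A_i has a minimum
    (∀ i j : ι, (∃ x : A i, ∀ y : A i, x ≤ y) → (∃ x : A j, ∀ y : A j, x ≤ y) → i = j) ∧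
    -- at most one of the A_i has a maximum
    (∀ i j : ι, (∃ x : A i, ∀ y : A i, y ≤ x) → (∃ x : A j, ∀ y : A j, y ≤ x) → i = j) ∧
    -- each A_i has order type η, 1+η, η+1 or 1+η+1
    (∀ i : ι,
      Nonempty (A i ≃o (Set.Ioo (0 : ℚ) 1)) ∨ Nonempty (A i ≃o (Set.Ico (0 : ℚ) 1)) ∨
      Nonempty (A i ≃o (Set.Ioc (0 : ℚ) 1)) ∨ Nonempty (A i ≃o (Set.Icc (0 : ℚ) 1))) := by
  have : Nontrivial ι := ⟨hι⟩
  have hdense : ∀ i, DenselyOrdered (A i) ∧ Nontrivial (A i) := fun i => by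
    obtain ⟨j, hj⟩ := exists_ne i
    rcases hj.lt_or_gt with h | h
    · exact ⟨(hsh j i h).denselyOrdered_right, (hsh j i h).nontrivial_right⟩
    · exact ⟨(hsh i j h).denselyOrdered_left, (hsh i j h).nontrivial_left⟩
  refine ⟨fun i _ _ => (hdense i).1.dense _ _, fun i j ⟨a, ha⟩ ⟨b, hb⟩ => ?_,
    fun i j ⟨a, ha⟩ ⟨b, hb⟩ => ?_, fun i => ?_⟩
  · rcases lt_trichotomy i j with h | h | h
    · exact ((hsh i j h).not_isBot_of_isBot ha b hb).elim
    · exact h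
    · exact ((hsh j i h).not_isBot_of_isBot hb a ha).elim
  · rcases lt_trichotomy i j with h | h | h
    · exact ((hsh i j h).not_isTop_of_isTop ha b hb).elim
    · exact h
    · exact ((hsh j i h).not_isTop_of_isTop hb a ha).elim
  · have := (hdense i).1
    have := (hdense i).2
    exact nonempty_orderIso_rat_Ioo_or_Ico_or_Ioc_or_Icc

theorem stmt_15 {ι : Type*} [LinearOrder ι]
    (A : ι → Type*) [∀ i, LinearOrder (A i)] [∀ i, Countable (A i)]
    (S : ∀ i j : ι, A i → A j → Prop)
    (hsh : ∀ i j : ι, i < j → IsShuffling (S i j))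
    (hcoh : ∀ i j k : ι, i < j → j < k → ∀ (a : A i) (c : A k),
      S i k a c ↔ ∃ b : A j, S i j a b ∧ S j k b c)
    (hι : ∃ i j : ι, i ≠ j) :
    -- each A_i is a (countable) dense linear order
    (∀ i : ι, ∀ a b : A i, a < b → ∃ c : A i, a < c ∧ c < b) ∧
    -- at most one of the A_i has a minimum
    (∀ i j : ι, (∃ x : A i, ∀ y : A i, x ≤ y) → (∃ x : A j, ∀ y : A j, x ≤ y) → i = j) ∧
    -- at most one of the A_i has a maximum
    (∀ i j : ι, (∃ x : A i, ∀ y : A i, y ≤ x) → (∃ x : A j, ∀ y : A j, y ≤ x) → i = j) ∧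
    -- each A_i has order type η, 1+η, η+1 or 1+η+1
    (∀ i : ι,
      Nonempty (A i ≃o (Set.Ioo (0 : ℚ) 1)) ∨ Nonempty (A i ≃o (Set.Ico (0 : ℚ) 1)) ∨
      Nonempty (A i ≃o (Set.Ioc (0 : ℚ) 1)) ∨ Nonempty (A i ≃o (Set.Icc (0 : ℚ) 1))) :=
  stmt_15_general A S hsh hι
end
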